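/- Fix m ∈ ℝ and let C₃(b) = (1-b₁²)b₂ - b₁²m² - b₃² on ℝ³. Define the functions q(b) = b₁ and p(b) = b₃/(1-b₁²) on the region b₁² ≠ 1. Then for every b ∈ ℝ³ with b₁² ≠ 1, the reduced Poisson bracket of q and p equals 1: ∇q(b) · ( ∇C₃(b) × ∇p(b) ) = 1. Hence (q,p) are canonical (symplectic) coordinates on the smooth part of the reduced phase space with respect to the reduced Poisson tensor ∇C₃^. -/

import Mathlib

noncomputable section

/-- The cross product in `ℝ³`. -/
def cross3 (v w : Fin 3 → ℝ) : Fin 3 → ℝ :=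
  ![v 1 * w 2 - v 2 * w 1, v 2 * w 0 - v 0 * w 2, v 0 * w 1 - v 1 * w 0]

/-- The dot product in `ℝ³`. -/
def dot3 (v w : Fin 3 → ℝ) : ℝ := v 0 * w 0 + v 1 * w 1 + v 2 * w 2

/-- `ℝ³` (`b`-space) as a Euclidean space. -/
abbrev E3 := EuclideanSpace ℝ (Fin 3)

/-- `C₃(b) = (1-b₁²)b₂ - b₁²m² - b₃²`. -/
def C3fun (m : ℝ) : E3 → ℝ := fun b =>
  (1 - (b 0) ^ 2) * b 1 - (b 0) ^ 2 * m ^ 2 - (b 2) ^ 2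

/-- `q(b) = b₁`. -/
def qfun : E3 → ℝ := fun b => b 0

/-- `p(b) = b₃/(1-b₁²)` (defined where `b₁² ≠ 1`). -/
def pfun : E3 → ℝ := fun b => b 2 / (1 - (b 0) ^ 2)

/-!
Since `q` is the first coordinate, `∇q = e₁` and the bracket reduces to
`∂₂C₃ ∂₃p - ∂₃C₃ ∂₂p`. As `p` does not depend on `b₂`, only `∂₂C₃ = 1 - b₁²` and
`∂₃p = 1/(1 - b₁²)` matter, and their product is `1`. Each partial derivative is computed
as the derivative along a coordinate line, which agrees with the gradient component
because `C₃` and `p` are differentiable where `b₁² ≠ 1`. (The coordinates `b₁, b₂, b₃`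
are `b 0, b 1, b 2` in Lean.)
-/

section PartialDerivatives

variable {ι : Type*} [Fintype ι] [DecidableEq ι]

theorem gradient_apply_eq_fderiv_single (f : EuclideanSpace ℝ ι → ℝ) (x : EuclideanSpace ℝ ι)
    (i : ι) :
    gradient f x i = fderiv ℝ f x (EuclideanSpace.single i 1) := by
  rw [gradient, ← InnerProductSpace.toDual_symm_apply, real_inner_comm,
    EuclideanSpace.inner_single_left]
  simp

theorem gradient_apply_of_hasLineDerivAt {f : EuclideanSpace ℝ ι → ℝ} {x : EuclideanSpace ℝ ι}
    {i : ι} {a : ℝ} (hf : DifferentiableAt ℝ f x)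
    (h : HasLineDerivAt ℝ f a x (EuclideanSpace.single i 1)) : gradient f x i = a := by
  rw [gradient_apply_eq_fderiv_single, ← hf.lineDeriv_eq_fderiv, h.lineDeriv]

end PartialDerivatives

theorem differentiable_C3fun (m : ℝ) : Differentiable ℝ (C3fun m) := by
  unfold C3fun; fun_prop

theorem differentiableAt_pfun {b : E3} (hb : 1 - b 0 ^ 2 ≠ 0) : DifferentiableAt ℝ pfun b := by
  unfold pfun; fun_prop (disch := exact hb)

theorem gradient_qfun (b : E3) (i : Fin 3) : gradient qfun b i = if i = 0 then 1 else 0 := by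
  rw [gradient_apply_eq_fderiv_single, show qfun = EuclideanSpace.proj 0 from rfl,
    ContinuousLinearMap.fderiv]
  simp [eq_comm]

theorem hasLineDerivAt_C3fun_single_one (m : ℝ) (b : E3) :
    HasLineDerivAt ℝ (C3fun m) (1 - b 0 ^ 2) b (EuclideanSpace.single 1 1) := by
  have hline : (fun t : ℝ => C3fun m (b + t • EuclideanSpace.single 1 1)) =
      fun t => (1 - b 0 ^ 2) * (b 1 + t) - b 0 ^ 2 * m ^ 2 - b 2 ^ 2 := by
    ext t; simp [C3fun]
  rw [HasLineDerivAt, hline]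
  exact ((((hasDerivAt_id (0 : ℝ)).const_add (b 1)).const_mul (1 - b 0 ^ 2)).sub_const
    (b 0 ^ 2 * m ^ 2)).sub_const (b 2 ^ 2) |>.congr_deriv (mul_one _)

theorem hasLineDerivAt_pfun_single_one (b : E3) :
    HasLineDerivAt ℝ pfun 0 b (EuclideanSpace.single 1 1) := by
  have hline : (fun t : ℝ => pfun (b + t • EuclideanSpace.single 1 1)) = fun _ => pfun b := by
    ext t; simp [pfun]
  rw [HasLineDerivAt, hline]
  exact hasDerivAt_const _ _

theorem hasLineDerivAt_pfun_single_two (b : E3) :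
    HasLineDerivAt ℝ pfun (1 / (1 - b 0 ^ 2)) b (EuclideanSpace.single 2 1) := by
  have hline : (fun t : ℝ => pfun (b + t • EuclideanSpace.single 2 1)) =
      fun t => (b 2 + t) / (1 - b 0 ^ 2) := by
    ext t; simp [pfun]
  rw [HasLineDerivAt, hline]
  exact ((hasDerivAt_id (0 : ℝ)).const_add (b 2)).div_const _

/-- On the smooth part `b₁² ≠ 1` of the reduced phase space, the reduced Poisson
bracket `{q,p}(b) = ∇q(b)·(∇C₃(b) × ∇p(b))` equals `1`, so `(q,p)` are canonical
coordinates for the reduced Poisson tensor `∇C₃^`. -/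
theorem qp_canonical (m : ℝ) (b : E3) (hb : (b 0) ^ 2 ≠ 1) :
    dot3 (fun i => gradient qfun b i)
      (cross3 (fun i => gradient (C3fun m) b i) (fun i => gradient pfun b i)) = 1 := by
  have hden : 1 - b 0 ^ 2 ≠ 0 := sub_ne_zero.mpr hb.symm
  have hC := differentiable_C3fun m b
  have hp := differentiableAt_pfun hden
  rw [dot3, cross3, gradient_qfun, gradient_qfun, gradient_qfun,
    gradient_apply_of_hasLineDerivAt hC (hasLineDerivAt_C3fun_single_one m b),
    gradient_apply_of_hasLineDerivAt hp (hasLineDerivAt_pfun_single_one b),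
    gradient_apply_of_hasLineDerivAt hp (hasLineDerivAt_pfun_single_two b)]
  simp [hden]
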